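/- arXiv:1507.05877 — 3 statements merged into one kernel-verified Lean document; each statement's English description precedes it below -/
import Mathlib

section
/- If a finite conjunction of constraints, each of the form n > aᵢ or f > cᵢ·n + dᵢ (with aᵢ, cᵢ, dᵢ ∈ ℤ), is satisfied by every point (n, fib(n)) with n ∈ ℕ, then the constraint set {(n1, f1, n2, f2, n3, f3) : n1 ≥ 0 ∧ n2 = n1+1 ∧ n3 = n2+1 ∧ f3 > f1+f2 ∧ C(n1,f1) ∧ C(n2,f2) ∧ C(n3,f3)} is satisfiable over ℤ, where C(n,f) denotes the conjunction. -/
def fib : ℕ → ℕ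
  | 0 => 1
  | 1 => 1
  | n+2 => fib n + fib (n+1)

/-- Atomic constraints: either `n > a` or `f > c·n + d`. -/
inductive AtomC : Type
  | gtN (a : ℤ) : AtomC
  | gtF (c d : ℤ) : AtomC

def AtomC.sat : AtomC → ℤ → ℤ → Prop
  | .gtN a, n, _ => n > a
  | .gtF c d, n, f => f > c * n + d

theorem fib_constraint_system_satisfiable (L : List AtomC)
    (h : ∀ n : ℕ, ∀ A ∈ L, A.sat (n : ℤ) (fib n : ℤ)) :
    ∃ n1 f1 n2 f2 n3 f3 : ℤ,
      n1 ≥ 0 ∧ n2 = n1 + 1 ∧ n3 = n2 + 1 ∧ f3 > f1 + f2 ∧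
      (∀ A ∈ L, A.sat n1 f1) ∧ (∀ A ∈ L, A.sat n2 f2) ∧ (∀ A ∈ L, A.sat n3 f3) := by
  refine ⟨0, 1, 1, 1, 2, 3, le_refl 0, rfl, rfl, by norm_num, ?_, ?_, ?_⟩
  · intro A hA
    have := h 0 A hA
    simpa [fib] using this
  · intro A hA
    have := h 1 A hA
    simpa [fib] using this
  · intro A hA
    have := h 2 A hA
    cases A with
    | gtN a => simpa [AtomC.sat, fib] using this
    | gtF c d =>
      simp only [AtomC.sat, fib] at this ⊢
      push_cast at this
      omega
end

section
/- If a convex-polyhedral constraint C on ℤ², given as a finite conjunction of linear inequalities, contains the point (n, fib(n)) for every n ∈ ℕ, then C cannot certify the Fibonacci recurrence inequality: there exist integers n1, f1, f2, f3 with n1 ≥ 0, f3 > f1 + f2, C(n1, f1), C(n1+1, f2), and C(n1+2, f3). -/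
lemma fib_eq_natFib_succ : ∀ n, fib n = Nat.fib (n + 1)
  | 0 => rfl
  | 1 => rfl
  | n + 2 => by rw [fib, fib_eq_natFib_succ n, fib_eq_natFib_succ (n + 1), ← Nat.fib_add_two]

lemma sq_le_fib_two_mul (n : ℕ) : n ^ 2 ≤ fib (2 * n) := by
  have hn : n ≤ Nat.fib (n + 1) := by simpa using Nat.le_fib_add_one (n + 1)
  rw [fib_eq_natFib_succ, Nat.fib_two_mul_add_one]
  calc n ^ 2 ≤ Nat.fib (n + 1) ^ 2 := Nat.pow_le_pow_left hn 2
    _ ≤ Nat.fib (n + 1) ^ 2 + Nat.fib n ^ 2 := Nat.le_add_right _ _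

lemma exists_linear_lt_fib (a b : ℤ) : ∃ n : ℕ, a * n + b < fib n := by
  -- `m > 2|a| + |b|`, so `m ^ 2 > a * (2 * m) + b`
  set m := 2 * a.natAbs + b.natAbs + 1
  refine ⟨2 * m, ?_⟩
  have hfib : (m : ℤ) ^ 2 ≤ fib (2 * m) := by exact_mod_cast sq_le_fib_two_mul m
  have ha : a ≤ a.natAbs := Int.le_natAbs
  have hb : b ≤ b.natAbs := Int.le_natAbs
  have hm : (m : ℤ) = 2 * a.natAbs + b.natAbs + 1 := by simp [m]
  push_cast
  nlinarith

lemma coeff_nonneg_of_forall_le_graph {f : ℕ → ℕ} (hf : ∀ a b : ℤ, ∃ n : ℕ, a * n + b < f n)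
    {p q r : ℤ} (h : ∀ n : ℕ, r ≤ p * n + q * f n) : 0 ≤ q := by
  by_contra! hq
  obtain ⟨n, hn⟩ := hf p (-r)
  have := h n
  nlinarith [(f n).cast_nonneg (α := ℤ)]

theorem polyhedral_cannot_certify_fib (k : ℕ) (p q r : Fin k → ℤ)
    (h : ∀ n : ℕ, ∀ i : Fin k, p i * (n : ℤ) + q i * (fib n : ℤ) ≥ r i) :
    ∃ n1 f1 f2 f3 : ℤ, n1 ≥ 0 ∧ f3 > f1 + f2 ∧
      (∀ i : Fin k, p i * n1 + q i * f1 ≥ r i) ∧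
      (∀ i : Fin k, p i * (n1 + 1) + q i * f2 ≥ r i) ∧
      (∀ i : Fin k, p i * (n1 + 2) + q i * f3 ≥ r i) := by
  have hq (i : Fin k) : 0 ≤ q i := coeff_nonneg_of_forall_le_graph exists_linear_lt_fib (h · i)
  refine ⟨0, 1, 1, 3, le_rfl, by norm_num, fun i => by simpa [fib] using h 0 i,
    fun i => by simpa [fib] using h 1 i, fun i => ?_⟩
  have h2 : p i * 2 + q i * 2 ≥ r i := by simpa [fib] using h 2 i
  linarith [hq i]
end

section
/- Partial correctness of the Fibonacci loop: for all n ≥ 0 and all n', u', v', t' ∈ ℤ, if r n 1 0 0 n' u' v' t' holds (where r is the inductively defined loop relation), then fibR n u' holds (where fibR is the inductively defined Fibonacci relation). -/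
inductive LoopR : ℤ → ℤ → ℤ → ℤ → ℤ → ℤ → ℤ → ℤ → Prop
  | base {n u v t : ℤ} : n ≤ 0 → LoopR n u v t n u v t
  | step {n u v t n2 u2 v2 t2 : ℤ} : n ≥ 1 →
      LoopR (n - 1) (u + v) u u n2 u2 v2 t2 → LoopR n u v t n2 u2 v2 t2
inductive FibR : ℤ → ℤ → Prop
  | f0 : FibR 0 1
  | f1 : FibR 1 1
  | step {n1 f1 f2 : ℤ} : n1 ≥ 0 → FibR n1 f1 → FibR (n1 + 1) f2 →
      FibR (n1 + 2) (f1 + f2)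

lemma loop_inv {k u v t n2 u2 v2 t2 : ℤ} (h : LoopR k u v t n2 u2 v2 t2) :
    ∀ m : ℤ, m ≥ 0 → k ≥ 0 → FibR m u → FibR (m + 1) (u + v) → FibR (m + k) u2 := by
  induction h with
  | @base k u v t hk =>
    intro m hm hk0 hu _
    have he : m + k = m := by omega
    rw [he]; exact hu
  | @step k u v t n2 u2 v2 t2 hk _ ih =>
    intro m hm _ hu huv
    have h2 : FibR (m + 1 + 1) ((u + v) + u) := by
      have := FibR.step hm hu huv
      have he : m + 2 = m + 1 + 1 := by ring
      have he2 : u + (u + v) = (u + v) + u := by ring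
      rw [he, he2] at this; exact this
    have := ih (m + 1) (by omega) (by omega) huv h2
    have he : m + 1 + (k - 1) = m + k := by ring
    rw [he] at this; exact this

theorem loop_partial_correctness (n : ℤ) (hn : n ≥ 0) (n' u' v' t' : ℤ)
    (h : LoopR n 1 0 0 n' u' v' t') : FibR n u' := by
  have := loop_inv h 0 le_rfl hn FibR.f0 (by norm_num; exact FibR.f1)
  simpa using this
end
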